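/- For every natural number n, the number of permutations of length n in the juxtaposition class Av(231|12) equals the number of permutations of length n in the juxtaposition class Av(321|12). (There is a bijection θ : Av(231|12) → Av(321|12).) -/

import Mathlib

/-- `σ` contains an occurrence of the pattern `π` using only positions in `S`. -/
def ContainsIn {n m : ℕ} (σ : Equiv.Perm (Fin n)) (π : Equiv.Perm (Fin m))
    (S : Set (Fin n)) : Prop :=
  ∃ f : Fin m → Fin n, StrictMono f ∧ (∀ s, f s ∈ S) ∧
    ∀ s t : Fin m, σ (f s) < σ (f t) ↔ π s < π t

/-- `σ` contains an occurrence of the pattern `π`. -/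
def Contains {n m : ℕ} (σ : Equiv.Perm (Fin n)) (π : Equiv.Perm (Fin m)) : Prop :=
  ContainsIn σ π Set.univ

/-- `σ` avoids the pattern `π`. -/
def Avoids {n m : ℕ} (σ : Equiv.Perm (Fin n)) (π : Equiv.Perm (Fin m)) : Prop :=
  ¬ Contains σ π

/-- `σ` lies in the juxtaposition class `Av(P|Q)`: positions split at some cut `k`
(`0 ≤ k ≤ n`), no occurrence of `P` within the first `k` positions and no occurrence
of `Q` within the remaining positions. -/
def JuxtAv {n p q : ℕ} (P : Equiv.Perm (Fin p)) (Q : Equiv.Perm (Fin q))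
    (σ : Equiv.Perm (Fin n)) : Prop :=
  ∃ k ≤ n, ¬ ContainsIn σ P {i : Fin n | (i : ℕ) < k} ∧
    ¬ ContainsIn σ Q {i : Fin n | k ≤ (i : ℕ)}

noncomputable def p231 : Equiv.Perm (Fin 3) :=
  Equiv.ofBijective (![1,2,0] : Fin 3 → Fin 3) (by decide)

noncomputable def p321 : Equiv.Perm (Fin 3) :=
  Equiv.ofBijective (![2,1,0] : Fin 3 → Fin 3) (by decide)

noncomputable def p12 : Equiv.Perm (Fin 2) :=
  Equiv.ofBijective (![0,1] : Fin 2 → Fin 2) (by decide)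

/-!
A permutation lies in `Av(P|12)` iff the part before its longest decreasing suffix avoids `P`:
the positions after any admissible cut carry a decreasing sequence, so the cut may be moved left
to where that suffix starts, and shrinking the prefix only helps avoidance. Given the suffix, the
prefix is any arrangement of the remaining values whose last entry lies below the first entry of
the suffix. It therefore suffices that, for every value set `V` and every last entry `r`, equally
many arrangements of `V` ending in `r` avoid 231 and 321.

Removing the last entry `r` of a 231-avoider leaves a 231-avoider whose entries above `r`
decrease; for 321 they increase instead. Counting the arrangements of `V` that avoid the pattern
and are monotone above a threshold `t` by their last entry gives the same recursion in both cases,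
in which only `#V` and `#{v ∈ V | v ≤ t}` enter: an entry `r ≤ t` may come last and becomes the
new threshold, while of the entries above `t` only the smallest (for 231), resp. the largest
(for 321), can come last.
-/

open Finset Function

namespace JuxtapositionClass

section Arrangements

variable {α : Type*} {m : ℕ}

lemma forall_val_add_one_eq_iff {P : Fin (m + 1) → Prop} :
    (∀ i : Fin (m + 1), (i : ℕ) + 1 = m + 1 → P i) ↔ P (Fin.last m) :=
  ⟨fun h => h _ rfl, fun h i hi => by
    rwa [show i = Fin.last m from Fin.ext (Nat.succ_injective hi)]⟩

lemma not_last_lt_castSucc (i : Fin m) : ¬ Fin.last m < i.castSucc :=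
  (Fin.castSucc_lt_last i).not_gt

def IsArrangement (V : Finset α) (w : Fin m → α) : Prop :=
  Injective w ∧ Set.range w = V

lemma IsArrangement.mem {V : Finset α} {w : Fin m → α} (h : IsArrangement V w) (i : Fin m) :
    w i ∈ V := by
  rw [← mem_coe, ← h.2]
  exact Set.mem_range_self i

lemma IsArrangement.exists_eq {V : Finset α} {w : Fin m → α} (h : IsArrangement V w) {v : α}
    (hv : v ∈ V) : ∃ i, w i = v := by
  rwa [← mem_coe, ← h.2] at hv

lemma isArrangement_snoc_iff [DecidableEq α] {V : Finset α} {w : Fin m → α} {r : α} :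
    IsArrangement V (Fin.snoc w r : Fin (m + 1) → α) ↔ r ∈ V ∧ IsArrangement (V.erase r) w := by
  simp only [IsArrangement, Fin.snoc_injective_iff, Fin.range_snoc, coe_erase]
  constructor
  · rintro ⟨⟨hw, hr⟩, hV⟩
    refine ⟨by simp [← mem_coe, ← hV], hw, ?_⟩
    rw [← hV, Set.insert_sdiff_self_of_notMem hr]
  · rintro ⟨hr, hw, hV⟩
    refine ⟨⟨hw, by simp [hV]⟩, ?_⟩
    rw [hV, Set.insert_sdiff_singleton, Set.insert_eq_of_mem (mem_coe.2 hr)]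

lemma snoc_init_of_last {w : Fin (m + 1) → α} {r : α} (h : w (Fin.last m) = r) :
    Fin.snoc (Fin.init w) r = w :=
  h ▸ Fin.snoc_init_self w

lemma IsArrangement.init [DecidableEq α] {V : Finset α} {w : Fin (m + 1) → α} {r : α}
    (h : IsArrangement V w) (hlast : w (Fin.last m) = r) :
    IsArrangement (V.erase r) (Fin.init w) :=
  (isArrangement_snoc_iff.1 (by rwa [snoc_init_of_last hlast])).2

def snocEquiv [DecidableEq α] {V : Finset α} {r : α} (hr : r ∈ V)
    {Q : (Fin (m + 1) → α) → Prop} {Q' : (Fin m → α) → Prop}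
    (hQ : ∀ w, IsArrangement (V.erase r) w → (Q (Fin.snoc w r) ↔ Q' w)) :
    {w : Fin (m + 1) → α // (IsArrangement V w ∧ w (Fin.last m) = r) ∧ Q w} ≃
      {w : Fin m → α // IsArrangement (V.erase r) w ∧ Q' w} where
  toFun w := ⟨Fin.init w.1, w.2.1.1.init w.2.1.2,
    (hQ _ (w.2.1.1.init w.2.1.2)).1 (by rw [snoc_init_of_last w.2.1.2]; exact w.2.2)⟩
  invFun w := ⟨Fin.snoc w.1 r, ⟨isArrangement_snoc_iff.2 ⟨hr, w.2.1⟩, by simp⟩,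
    (hQ _ w.2.1).2 w.2.2⟩
  left_inv w := Subtype.ext (snoc_init_of_last w.2.1.2)
  right_inv w := Subtype.ext (Fin.init_snoc (α := fun _ => α) _ _)

lemma card_arrangement_zero (V : Finset α) {Q : (Fin 0 → α) → Prop} (hQ : ∀ w, Q w) :
    Nat.card {w : Fin 0 → α // IsArrangement V w ∧ Q w} = if #V = 0 then 1 else 0 := by
  have harr : ∀ w : Fin 0 → α, IsArrangement V w ↔ #V = 0 := fun w => by
    simp [IsArrangement, Injective, Set.range_eq_empty, eq_comm (a := (∅ : Set α))]
  split_ifs with hV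
  · rw [Nat.card_eq_one_iff_unique]
    exact ⟨⟨fun a b => Subtype.ext (Subsingleton.elim _ _)⟩, ⟨⟨Fin.elim0, (harr _).2 hV, hQ _⟩⟩⟩
  · rw [Nat.card_eq_zero]
    exact Or.inl ⟨fun w => hV ((harr _).1 w.2.1)⟩

lemma card_arrangement_eq_sum_card_last [Finite α] (V : Finset α) (Q : (Fin (m + 1) → α) → Prop) :
    Nat.card {w : Fin (m + 1) → α // IsArrangement V w ∧ Q w} =
      ∑ r ∈ V, Nat.card
        {w : Fin (m + 1) → α // (IsArrangement V w ∧ w (Fin.last m) = r) ∧ Q w} := by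
  let e : {w : Fin (m + 1) → α // IsArrangement V w ∧ Q w} ≃
      Σ r : V, {w : Fin (m + 1) → α // (IsArrangement V w ∧ w (Fin.last m) = r) ∧ Q w} :=
    { toFun w := ⟨⟨w.1 (Fin.last m), w.2.1.mem _⟩, w.1, ⟨w.2.1, rfl⟩, w.2.2⟩
      invFun w := ⟨w.2.1, w.2.2.1.1, w.2.2.2⟩
      left_inv _ := rfl
      right_inv := by
        rintro ⟨⟨r, hr⟩, w, ⟨hw, hlast : w (Fin.last m) = r⟩, hQ⟩
        subst hlast
        rfl }
  rw [Nat.card_congr e, Nat.card_sigma, sum_coe_sort V (fun r => Nat.card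
    {w : Fin (m + 1) → α // (IsArrangement V w ∧ w (Fin.last m) = r) ∧ Q w})]

end Arrangements

section Patterns

variable {α : Type*} [LinearOrder α] {m : ℕ}

def Has231 (w : Fin m → α) : Prop :=
  ∃ i j l : Fin m, i < j ∧ j < l ∧ w l < w i ∧ w i < w j

def Has321 (w : Fin m → α) : Prop :=
  ∃ i j l : Fin m, i < j ∧ j < l ∧ w l < w j ∧ w j < w i

lemma has231_snoc {w : Fin m → α} {r : α} :
    Has231 (Fin.snoc w r : Fin (m + 1) → α) ↔
      Has231 w ∨ ∃ i j, i < j ∧ r < w i ∧ w i < w j := by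
  simp [Has231, Fin.exists_fin_succ', Fin.castSucc_lt_last, not_last_lt_castSucc, and_or_left,
    exists_or]

lemma has321_snoc {w : Fin m → α} {r : α} :
    Has321 (Fin.snoc w r : Fin (m + 1) → α) ↔
      Has321 w ∨ ∃ i j, i < j ∧ r < w j ∧ w j < w i := by
  simp [Has321, Fin.exists_fin_succ', Fin.castSucc_lt_last, not_last_lt_castSucc, and_or_left,
    exists_or]

lemma strictAntiOn_snoc {w : Fin m → α} {r t : α} :
    StrictAntiOn (Fin.snoc w r : Fin (m + 1) → α) {i | t < (Fin.snoc w r : Fin (m + 1) → α) i} ↔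
      StrictAntiOn w {i | t < w i} ∧ ∀ i, t < w i → t < r → r < w i := by
  simp [StrictAntiOn, Fin.forall_fin_succ', Fin.castSucc_lt_last, not_last_lt_castSucc, imp_and,
    forall_and]

lemma strictMonoOn_snoc {w : Fin m → α} {r t : α} :
    StrictMonoOn (Fin.snoc w r : Fin (m + 1) → α) {i | t < (Fin.snoc w r : Fin (m + 1) → α) i} ↔
      StrictMonoOn w {i | t < w i} ∧ ∀ i, t < w i → t < r → w i < r := by
  simp [StrictMonoOn, Fin.forall_fin_succ', Fin.castSucc_lt_last, not_last_lt_castSucc, imp_and,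
    forall_and]

lemma not_has231_snoc {w : Fin m → α} (hw : Injective w) {r : α} :
    ¬ Has231 (Fin.snoc w r : Fin (m + 1) → α) ↔ ¬ Has231 w ∧ StrictAntiOn w {i | r < w i} := by
  simp only [has231_snoc, not_or, not_exists, not_and, not_lt]
  refine and_congr_right fun _ => ⟨fun h i hi j _ hij => ?_, fun h i j hij hi => ?_⟩
  · exact (h i j hij hi).lt_of_ne (hw.ne hij.ne')
  · by_cases hj : r < w j
    · exact (h hi hj hij).le
    · exact (not_lt.1 hj).trans hi.le

lemma not_has321_snoc {w : Fin m → α} (hw : Injective w) {r : α} :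
    ¬ Has321 (Fin.snoc w r : Fin (m + 1) → α) ↔ ¬ Has321 w ∧ StrictMonoOn w {i | r < w i} := by
  simp only [has321_snoc, not_or, not_exists, not_and, not_lt]
  refine and_congr_right fun _ => ⟨fun h i hi j hj hij => ?_, fun h i j hij hj => ?_⟩
  · exact (h i j hij hj).lt_of_ne (hw.ne hij.ne)
  · by_cases hi : r < w i
    · exact (h hi hj hij).le
    · exact (not_lt.1 hi).trans hj.le

end Patterns

section Rank

variable {β : Type*} [LinearOrder β]

lemma card_filter_lt_orderEmbOfFin (s : Finset β) {k : ℕ} (h : #s = k) (i : Fin k) :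
    #{v ∈ s | v < s.orderEmbOfFin h i} = i := by
  -- naming `e` keeps the `s` inside it out of the rewrite below
  set e := s.orderEmbOfFin h
  have hs : s = univ.map e.toEmbedding := (map_orderEmbOfFin_univ s h).symm
  rw [hs]
  simp [filter_map, filter_gt_eq_Iio]

lemma sum_eq_sum_orderEmbOfFin {M : Type*} [AddCommMonoid M] (s : Finset β) {k : ℕ} (h : #s = k)
    (f : β → M) : ∑ x ∈ s, f x = ∑ i, f (s.orderEmbOfFin h i) := by
  conv_lhs => rw [← map_orderEmbOfFin_univ s h, sum_map]
  rfl

lemma sum_eq_sum_of_card_filter_lt_eq {M : Type*} [AddCommMonoid M] {s s' : Finset β}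
    (h : #s = #s') {f g : β → M}
    (hfg : ∀ x ∈ s, ∀ y ∈ s', #{v ∈ s | v < x} = #{v ∈ s' | v < y} → f x = g y) :
    ∑ x ∈ s, f x = ∑ y ∈ s', g y := by
  rw [sum_eq_sum_orderEmbOfFin s h, sum_eq_sum_orderEmbOfFin s' rfl]
  refine sum_congr rfl fun i _ => hfg _ (orderEmbOfFin_mem _ _ _) _ (orderEmbOfFin_mem _ _ _) ?_
  rw [card_filter_lt_orderEmbOfFin, card_filter_lt_orderEmbOfFin]

lemma filter_le_erase_eq {s : Finset β} {r t : β} (hrt : r ≤ t) :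
    {v ∈ s.erase r | v ≤ r} = {v ∈ {v ∈ s | v ≤ t} | v < r} := by
  ext v
  simp only [mem_filter, mem_erase, lt_iff_le_and_ne]
  exact ⟨fun ⟨⟨hne, hv⟩, hle⟩ => ⟨⟨hv, hle.trans hrt⟩, hle, hne⟩,
    fun ⟨⟨hv, _⟩, hle, hne⟩ => ⟨⟨hne, hv⟩, hle⟩⟩

lemma filter_le_erase_of_lt {s : Finset β} {t u : β} (htu : t < u) :
    {v ∈ s.erase u | v ≤ t} = {v ∈ s | v ≤ t} := by
  rw [filter_erase, erase_eq_of_notMem fun h => (mem_filter.1 h).2.not_gt htu]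

lemma card_filter_lt_eq_sub (s : Finset β) (t : β) :
    #{v ∈ s | t < v} = #s - #{v ∈ s | v ≤ t} := by
  rw [← card_filter_add_card_filter_not (s := s) (· ≤ t)]
  simp [not_le]

end Rank

section Counting

variable {α : Type*} [LinearOrder α] {m : ℕ}

abbrev Av231Above (m : ℕ) (V : Finset α) (t : α) : Type _ :=
  {w : Fin m → α // IsArrangement V w ∧ ¬ Has231 w ∧ StrictAntiOn w {i | t < w i}}

abbrev Av321Above (m : ℕ) (V : Finset α) (t : α) : Type _ :=
  {w : Fin m → α // IsArrangement V w ∧ ¬ Has321 w ∧ StrictMonoOn w {i | t < w i}}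

def lastFiber231Equiv {V : Finset α} {r : α} (hr : r ∈ V) (t : α) :
    {w : Fin (m + 1) → α // (IsArrangement V w ∧ w (Fin.last m) = r) ∧
        ¬ Has231 w ∧ StrictAntiOn w {i | t < w i}} ≃
      {w : Fin m → α // IsArrangement (V.erase r) w ∧ (¬ Has231 w ∧ StrictAntiOn w {i | r < w i}) ∧
        StrictAntiOn w {i | t < w i} ∧ ∀ i, t < w i → t < r → r < w i} :=
  snocEquiv hr fun w hw => by rw [not_has231_snoc hw.1, strictAntiOn_snoc]

def lastFiber321Equiv {V : Finset α} {r : α} (hr : r ∈ V) (t : α) :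
    {w : Fin (m + 1) → α // (IsArrangement V w ∧ w (Fin.last m) = r) ∧
        ¬ Has321 w ∧ StrictMonoOn w {i | t < w i}} ≃
      {w : Fin m → α // IsArrangement (V.erase r) w ∧ (¬ Has321 w ∧ StrictMonoOn w {i | r < w i}) ∧
        StrictMonoOn w {i | t < w i} ∧ ∀ i, t < w i → t < r → w i < r} :=
  snocEquiv hr fun w hw => by rw [not_has321_snoc hw.1, strictMonoOn_snoc]

variable [Finite α]

lemma card_av231Above_succ (V : Finset α) (t : α) :
    Nat.card (Av231Above (m + 1) V t) =
      ∑ r ∈ V with r ≤ t, Nat.card (Av231Above m (V.erase r) r) +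
        if h : {v ∈ V | t < v}.Nonempty then
          Nat.card (Av231Above m (V.erase ({v ∈ V | t < v}.min' h)) t) else 0 := by
  rw [card_arrangement_eq_sum_card_last, ← sum_filter_add_sum_filter_not V (· ≤ t)]
  simp only [not_le]
  congr 1
  · refine sum_congr rfl fun r hr => ?_
    obtain ⟨hrV, hrt⟩ := mem_filter.1 hr
    refine Nat.card_congr ((lastFiber231Equiv hrV t).trans (Equiv.subtypeEquivRight fun w => ?_))
    refine and_congr_right fun _ => ⟨fun h => h.1, fun h => ⟨h, ?_, fun _ _ htr => ?_⟩⟩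
    · exact h.2.mono fun i hi => hrt.trans_lt hi
    · exact absurd hrt (not_le.2 htr)
  · split_ifs with h
    · obtain ⟨huV, htu⟩ := mem_filter.1 (min'_mem _ h)
      rw [sum_eq_single_of_mem _ (min'_mem _ h)]
      · refine Nat.card_congr <|
          (lastFiber231Equiv huV t).trans (Equiv.subtypeEquivRight fun w => ?_)
        refine and_congr_right fun hw => ⟨fun h => ⟨h.1.1, h.2.1⟩, fun h' => ⟨⟨h'.1, ?_⟩, h'.2, ?_⟩⟩
        · exact h'.2.mono fun i hi => htu.trans hi
        · intro i hi _
          have hwi := mem_erase.1 (hw.mem i)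
          exact (min'_le _ _ (mem_filter.2 ⟨hwi.2, hi⟩)).lt_of_ne hwi.1.symm
      · intro r hr hru
        obtain ⟨hrV, htr⟩ := mem_filter.1 hr
        rw [Nat.card_congr (lastFiber231Equiv hrV t), Nat.card_eq_zero]
        refine Or.inl ⟨fun ⟨w, hw, _, _, hw'⟩ => ?_⟩
        have hur : {v ∈ V | t < v}.min' h < r := (min'_le _ _ hr).lt_of_ne hru.symm
        obtain ⟨i, hi⟩ := hw.exists_eq (mem_erase.2 ⟨hur.ne, huV⟩)
        exact (hw' i (hi ▸ htu) htr).not_gt (hi ▸ hur)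
    · rw [not_nonempty_iff_eq_empty.1 h, sum_empty]

lemma card_av321Above_succ (V : Finset α) (t : α) :
    Nat.card (Av321Above (m + 1) V t) =
      ∑ r ∈ V with r ≤ t, Nat.card (Av321Above m (V.erase r) r) +
        if h : {v ∈ V | t < v}.Nonempty then
          Nat.card (Av321Above m (V.erase ({v ∈ V | t < v}.max' h)) t) else 0 := by
  rw [card_arrangement_eq_sum_card_last, ← sum_filter_add_sum_filter_not V (· ≤ t)]
  simp only [not_le]
  congr 1
  · refine sum_congr rfl fun r hr => ?_
    obtain ⟨hrV, hrt⟩ := mem_filter.1 hr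
    refine Nat.card_congr ((lastFiber321Equiv hrV t).trans (Equiv.subtypeEquivRight fun w => ?_))
    refine and_congr_right fun _ => ⟨fun h => h.1, fun h => ⟨h, ?_, fun _ _ htr => ?_⟩⟩
    · exact h.2.mono fun i hi => hrt.trans_lt hi
    · exact absurd hrt (not_le.2 htr)
  · split_ifs with h
    · obtain ⟨huV, htu⟩ := mem_filter.1 (max'_mem _ h)
      rw [sum_eq_single_of_mem _ (max'_mem _ h)]
      · refine Nat.card_congr <|
          (lastFiber321Equiv huV t).trans (Equiv.subtypeEquivRight fun w => ?_)
        refine and_congr_right fun hw => ⟨fun h => ⟨h.1.1, h.2.1⟩, fun h' => ⟨⟨h'.1, ?_⟩, h'.2, ?_⟩⟩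
        · exact h'.2.mono fun i hi => htu.trans hi
        · intro i hi _
          have hwi := mem_erase.1 (hw.mem i)
          exact (le_max' _ _ (mem_filter.2 ⟨hwi.2, hi⟩)).lt_of_ne hwi.1
      · intro r hr hru
        obtain ⟨hrV, htr⟩ := mem_filter.1 hr
        rw [Nat.card_congr (lastFiber321Equiv hrV t), Nat.card_eq_zero]
        refine Or.inl ⟨fun ⟨w, hw, _, _, hw'⟩ => ?_⟩
        have hru' : r < {v ∈ V | t < v}.max' h := (le_max' _ _ hr).lt_of_ne hru
        obtain ⟨i, hi⟩ := hw.exists_eq (mem_erase.2 ⟨hru'.ne', huV⟩)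
        exact (hw' i (hi ▸ htu) htr).not_gt (hi ▸ hru')
    · rw [not_nonempty_iff_eq_empty.1 h, sum_empty]

theorem card_av231Above_eq_card_av321Above (m : ℕ) {V V' : Finset α} {t t' : α}
    (hcard : #V = #V') (hle : #{v ∈ V | v ≤ t} = #{v ∈ V' | v ≤ t'}) :
    Nat.card (Av231Above m V t) = Nat.card (Av321Above m V' t') := by
  induction m generalizing V V' t t' with
  | zero =>
    rw [card_arrangement_zero V (fun w => ⟨fun ⟨i, _⟩ => i.elim0, fun i => i.elim0⟩),
      card_arrangement_zero V' (fun w => ⟨fun ⟨i, _⟩ => i.elim0, fun i => i.elim0⟩), hcard]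
  | succ m ih =>
    rw [card_av231Above_succ, card_av321Above_succ]
    congr 1
    · refine sum_eq_sum_of_card_filter_lt_eq hle fun r hr r' hr' hrank => ih ?_ ?_
      · rw [card_erase_of_mem (mem_filter.1 hr).1, card_erase_of_mem (mem_filter.1 hr').1, hcard]
      · rwa [filter_le_erase_eq (mem_filter.1 hr).2, filter_le_erase_eq (mem_filter.1 hr').2]
    · have hne : {v ∈ V | t < v}.Nonempty ↔ {v ∈ V' | t' < v}.Nonempty := by
        rw [← card_pos, ← card_pos, card_filter_lt_eq_sub, card_filter_lt_eq_sub, hcard, hle]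
      by_cases h : {v ∈ V | t < v}.Nonempty
      · rw [dif_pos h, dif_pos (hne.1 h)]
        have hu := mem_filter.1 (min'_mem _ h)
        have hu' := mem_filter.1 (max'_mem _ (hne.1 h))
        refine ih ?_ ?_
        · rw [card_erase_of_mem hu.1, card_erase_of_mem hu'.1, hcard]
        · rwa [filter_le_erase_of_lt hu.2, filter_le_erase_of_lt hu'.2]
      · rw [dif_neg h, dif_neg (mt hne.2 h)]

end Counting

section LastEntry

variable {α : Type*} [LinearOrder α] [Finite α] {m : ℕ}

theorem card_not_has231_eq_card_not_has321 (V : Finset α) (p : α → Prop) :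
    Nat.card {w : Fin m → α // IsArrangement V w ∧ ¬ Has231 w ∧
        ∀ i : Fin m, (i : ℕ) + 1 = m → p (w i)} =
      Nat.card {w : Fin m → α // IsArrangement V w ∧ ¬ Has321 w ∧
        ∀ i : Fin m, (i : ℕ) + 1 = m → p (w i)} := by
  cases m with
  | zero =>
    refine Nat.card_congr (Equiv.subtypeEquivRight fun w => and_congr_right fun _ =>
      and_congr_left fun _ => iff_of_true ?_ ?_)
    · exact fun ⟨i, _⟩ => i.elim0
    · exact fun ⟨i, _⟩ => i.elim0
  | succ m =>
    simp only [forall_val_add_one_eq_iff]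
    rw [card_arrangement_eq_sum_card_last, card_arrangement_eq_sum_card_last]
    refine sum_congr rfl fun r hr => ?_
    by_cases hp : p r
    · have e231 := snocEquiv (Q' := fun w => ¬ Has231 w ∧ StrictAntiOn w {i | r < w i}) hr
        (Q := fun w => ¬ Has231 w ∧ p (w (Fin.last m)))
        fun w hw => by simp only [not_has231_snoc hw.1, Fin.snoc_last, hp, and_true]
      have e321 := snocEquiv (Q' := fun w => ¬ Has321 w ∧ StrictMonoOn w {i | r < w i}) hr
        (Q := fun w => ¬ Has321 w ∧ p (w (Fin.last m)))
        fun w hw => by simp only [not_has321_snoc hw.1, Fin.snoc_last, hp, and_true]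
      rw [Nat.card_congr e231, Nat.card_congr e321]
      exact card_av231Above_eq_card_av321Above m rfl rfl
    · have hempty : ∀ Q : (Fin (m + 1) → α) → Prop, Nat.card {w : Fin (m + 1) → α //
          (IsArrangement V w ∧ w (Fin.last m) = r) ∧ Q w ∧ p (w (Fin.last m))} = 0 :=
        fun Q => Nat.card_eq_zero.2 (Or.inl ⟨fun ⟨w, ⟨_, hlast⟩, _, hpw⟩ => hp (hlast ▸ hpw)⟩)
      rw [hempty, hempty]

end LastEntry

section Occurrences

variable {α : Type*} [LinearOrder α] {m : ℕ}

def Occurs {k p : ℕ} (π : Equiv.Perm (Fin p)) (w : Fin k → α) : Prop :=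
  ∃ f : Fin p → Fin k, StrictMono f ∧ ∀ s t, w (f s) < w (f t) ↔ π s < π t

lemma occurs_congr {p : ℕ} {π : Equiv.Perm (Fin p)} {k k' : ℕ} (h : k = k') {w : Fin k → α}
    {w' : Fin k' → α} (hw : ∀ i (hi : i < k) (hi' : i < k'), w ⟨i, hi⟩ = w' ⟨i, hi'⟩) :
    Occurs π w ↔ Occurs π w' := by
  subst h
  rw [show w = w' from funext fun i => hw i i.2 i.2]

lemma occurs_p231_iff {w : Fin m → α} : Occurs p231 w ↔ Has231 w := by
  constructor
  · rintro ⟨f, hf, hw⟩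
    exact ⟨f 0, f 1, f 2, hf (by decide), hf (by decide), (hw 2 0).2 (by decide),
      (hw 0 1).2 (by decide)⟩
  · rintro ⟨i, j, l, hij, hjl, h₁, h₂⟩
    refine ⟨![i, j, l], Fin.strictMono_iff_lt_succ.2 fun s => ?_, fun s t => ?_⟩
    · fin_cases s <;> simpa
    · fin_cases s <;> fin_cases t <;> simp [p231] <;> order

lemma occurs_p321_iff {w : Fin m → α} : Occurs p321 w ↔ Has321 w := by
  constructor
  · rintro ⟨f, hf, hw⟩
    exact ⟨f 0, f 1, f 2, hf (by decide), hf (by decide), (hw 2 1).2 (by decide),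
      (hw 1 0).2 (by decide)⟩
  · rintro ⟨i, j, l, hij, hjl, h₁, h₂⟩
    refine ⟨![i, j, l], Fin.strictMono_iff_lt_succ.2 fun s => ?_, fun s t => ?_⟩
    · fin_cases s <;> simpa
    · fin_cases s <;> fin_cases t <;> simp [p321] <;> order

end Occurrences

section Permutations

variable {n p : ℕ}

lemma containsIn_Iio_iff_occurs (σ : Equiv.Perm (Fin n)) (π : Equiv.Perm (Fin p)) {k : ℕ}
    (hk : k ≤ n) :
    ContainsIn σ π {i | (i : ℕ) < k} ↔ Occurs π (σ ∘ Fin.castLE hk) := by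
  constructor
  · rintro ⟨f, hf, hmem, hσ⟩
    exact ⟨fun s => ⟨f s, hmem s⟩, fun s t hst => hf hst, hσ⟩
  · rintro ⟨f, hf, hσ⟩
    exact ⟨fun s => Fin.castLE hk (f s), fun s t hst => hf hst, fun s => (f s).2, hσ⟩

lemma not_containsIn_p12_iff (σ : Equiv.Perm (Fin n)) (S : Set (Fin n)) :
    ¬ ContainsIn σ p12 S ↔ StrictAntiOn σ S := by
  constructor
  · intro h a ha b hb hab
    refine (le_of_not_gt fun hlt => h ⟨![a, b], ?_, ?_, fun s t => ?_⟩).lt_of_ne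
      (σ.injective.ne hab.ne')
    · exact Fin.strictMono_iff_lt_succ.2 fun s => by fin_cases s; simpa
    · intro s; fin_cases s <;> assumption
    · fin_cases s <;> fin_cases t <;> simp [p12] <;> order
  · rintro h ⟨f, hf, hmem, hσ⟩
    exact (h (hmem 0) (hmem 1) (hf (by decide))).not_gt ((hσ 0 1).2 (by decide))

noncomputable def tailStart (σ : Equiv.Perm (Fin n)) : ℕ :=
  sInf {k | StrictAntiOn σ {i | k ≤ (i : ℕ)}}

lemma strictAntiOn_tailStart (σ : Equiv.Perm (Fin n)) :
    StrictAntiOn σ {i | tailStart σ ≤ (i : ℕ)} :=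
  Nat.sInf_mem (s := {k | StrictAntiOn σ {i | k ≤ (i : ℕ)}})
    ⟨n, fun i hi => absurd i.2 (not_lt.2 hi)⟩

lemma tailStart_le_of_strictAntiOn {σ : Equiv.Perm (Fin n)} {k : ℕ}
    (h : StrictAntiOn σ {i | k ≤ (i : ℕ)}) : tailStart σ ≤ k :=
  Nat.sInf_le h

lemma tailStart_le (σ : Equiv.Perm (Fin n)) : tailStart σ ≤ n :=
  tailStart_le_of_strictAntiOn fun i hi => absurd i.2 (not_lt.2 hi)

lemma tailStart_eq_zero_or_lt (σ : Equiv.Perm (Fin n)) : tailStart σ = 0 ∨ tailStart σ < n := by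
  have : tailStart σ ≤ n - 1 := tailStart_le_of_strictAntiOn fun i hi j hj hij => by
    have := Fin.lt_def.1 hij; simp only [Set.mem_ofPred_eq] at hi hj; omega
  omega

lemma apply_lt_apply_tailStart (σ : Equiv.Perm (Fin n)) {i j : Fin n}
    (hi : (i : ℕ) + 1 = tailStart σ) (hj : (j : ℕ) = tailStart σ) : σ i < σ j := by
  by_contra! hle
  have hlt : σ j < σ i := hle.lt_of_ne (σ.injective.ne (Fin.ne_of_val_ne (by omega)))
  have hset : {x : Fin n | (i : ℕ) ≤ x} = insert i {x : Fin n | tailStart σ ≤ (x : ℕ)} := by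
    ext x; simp only [Set.mem_ofPred_eq, Set.mem_insert_iff, Fin.ext_iff]; omega
  have hanti : StrictAntiOn σ {x | (i : ℕ) ≤ x} := by
    rw [hset, strictAntiOn_insert_iff_of_forall_ge fun x hx => by simp only [Set.mem_ofPred_eq] at hx ⊢; omega]
    refine ⟨fun b hb _ => ?_, strictAntiOn_tailStart σ⟩
    rcases eq_or_lt_of_le (show (j : ℕ) ≤ b by simp only [Set.mem_ofPred_eq] at hb; omega) with h | h
    · rwa [← Fin.ext h]
    · exact (strictAntiOn_tailStart σ hj.ge hb h).trans hlt
  have := tailStart_le_of_strictAntiOn hanti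
  omega

lemma tailStart_eq {σ : Equiv.Perm (Fin n)} {k : ℕ} (hk : k = 0 ∨ k < n)
    (hanti : StrictAntiOn σ {i | k ≤ (i : ℕ)})
    (hasc : ∀ i j : Fin n, (i : ℕ) + 1 = k → (j : ℕ) = k → σ i < σ j) : tailStart σ = k := by
  refine (tailStart_le_of_strictAntiOn hanti).antisymm (not_lt.1 fun hlt => ?_)
  have hkn : k < n := hk.resolve_left (by omega)
  exact (hasc ⟨k - 1, by omega⟩ ⟨k, hkn⟩ (show k - 1 + 1 = k by omega) rfl).not_gt
    (strictAntiOn_tailStart σ (show tailStart σ ≤ k - 1 by omega) (show tailStart σ ≤ k by omega)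
      (Fin.lt_def.2 (show k - 1 < k by omega)))

noncomputable def prefixWord (σ : Equiv.Perm (Fin n)) : Fin (tailStart σ) → Fin n :=
  σ ∘ Fin.castLE (tailStart_le σ)

theorem juxtAv_p12_iff (P : Equiv.Perm (Fin p)) (σ : Equiv.Perm (Fin n)) :
    JuxtAv P p12 σ ↔ ¬ Occurs P (prefixWord σ) := by
  rw [prefixWord, ← containsIn_Iio_iff_occurs]
  constructor
  · rintro ⟨k, -, hP, h12⟩ ⟨f, hf, hmem, hσ⟩
    have hk := tailStart_le_of_strictAntiOn ((not_containsIn_p12_iff σ _).1 h12)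
    exact hP ⟨f, hf, fun s => lt_of_lt_of_le (hmem s) hk, hσ⟩
  · exact fun h => ⟨tailStart σ, tailStart_le σ, h,
      (not_containsIn_p12_iff σ _).2 (strictAntiOn_tailStart σ)⟩

end Permutations

section Decomposition

variable {n p : ℕ}

/-- `val` agrees with the permutation from `start` on and is the identity before it, so that the
tail data of a permutation is determined by its tail. -/
structure TailData (n : ℕ) where
  start : ℕ
  val : Fin n → Fin n
  start_eq_zero_or_lt : start = 0 ∨ start < n
  strictAntiOn_val : StrictAntiOn val {i | start ≤ (i : ℕ)}
  val_of_lt : ∀ i : Fin n, (i : ℕ) < start → val i = i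

namespace TailData

def prefixValues (d : TailData n) : Finset (Fin n) :=
  (({i | d.start ≤ (i : ℕ)} : Finset (Fin n)).image d.val)ᶜ

def LtHead (d : TailData n) (x : Fin n) : Prop :=
  ∀ j : Fin n, (j : ℕ) = d.start → x < d.val j

abbrev Fiber (P : Equiv.Perm (Fin p)) (d : TailData n) : Type :=
  {w : Fin d.start → Fin n // IsArrangement d.prefixValues w ∧ ¬ Occurs P w ∧
    ∀ i : Fin d.start, (i : ℕ) + 1 = d.start → d.LtHead (w i)}

def glue (d : TailData n) (w : Fin d.start → Fin n) (i : Fin n) : Fin n :=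
  if h : (i : ℕ) < d.start then w ⟨i, h⟩ else d.val i

lemma glue_injective (d : TailData n) {w : Fin d.start → Fin n}
    (hw : IsArrangement d.prefixValues w) : Injective (d.glue w) := by
  have hcross : ∀ (a : Fin d.start) (b : Fin n), d.start ≤ (b : ℕ) → w a ≠ d.val b :=
    fun a b hb he => by
      have := hw.mem a
      simp only [prefixValues, mem_compl, mem_image, mem_filter, mem_univ, true_and, not_exists,
        not_and] at this
      exact this b hb he.symm
  intro a b hab
  unfold glue at hab
  split_ifs at hab with ha hb hb
  · exact Fin.ext (Fin.mk.inj_iff.1 (hw.1 hab))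
  · exact absurd hab (hcross _ b (not_lt.1 hb))
  · exact absurd hab.symm (hcross _ a (not_lt.1 ha))
  · exact d.strictAntiOn_val.injOn (not_lt.1 ha) (not_lt.1 hb) hab

noncomputable def toPerm (d : TailData n) (w : Fin d.start → Fin n)
    (hw : IsArrangement d.prefixValues w) : Equiv.Perm (Fin n) :=
  Equiv.ofBijective (d.glue w) (Finite.injective_iff_bijective.1 (d.glue_injective hw))

lemma toPerm_of_lt (d : TailData n) {w : Fin d.start → Fin n} (hw : IsArrangement d.prefixValues w)
    {i : Fin n} (hi : (i : ℕ) < d.start) : d.toPerm w hw i = w ⟨i, hi⟩ :=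
  dif_pos hi

lemma toPerm_of_le (d : TailData n) {w : Fin d.start → Fin n} (hw : IsArrangement d.prefixValues w)
    {i : Fin n} (hi : d.start ≤ (i : ℕ)) : d.toPerm w hw i = d.val i :=
  dif_neg (not_lt.2 hi)

lemma tailStart_toPerm (d : TailData n) {w : Fin d.start → Fin n}
    (hw : IsArrangement d.prefixValues w)
    (hlast : ∀ i : Fin d.start, (i : ℕ) + 1 = d.start → d.LtHead (w i)) :
    tailStart (d.toPerm w hw) = d.start := by
  refine tailStart_eq d.start_eq_zero_or_lt (fun i hi j hj hij => ?_) fun i j hi hj => ?_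
  · rw [toPerm_of_le d hw hi, toPerm_of_le d hw hj]
    exact d.strictAntiOn_val hi hj hij
  · rw [toPerm_of_lt d hw (by omega), toPerm_of_le d hw hj.ge]
    exact hlast _ hi j hj

end TailData

noncomputable def toTailData (σ : Equiv.Perm (Fin n)) : TailData n where
  start := tailStart σ
  val i := if (i : ℕ) < tailStart σ then i else σ i
  start_eq_zero_or_lt := tailStart_eq_zero_or_lt σ
  strictAntiOn_val i hi j hj hij := by
    simp only [Set.mem_ofPred_eq] at hi hj
    simp only [if_neg (not_lt.2 hi), if_neg (not_lt.2 hj)]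
    exact strictAntiOn_tailStart σ hi hj hij
  val_of_lt _ hi := if_pos hi

lemma toTailData_val_of_lt (σ : Equiv.Perm (Fin n)) {i : Fin n} (hi : (i : ℕ) < tailStart σ) :
    (toTailData σ).val i = i :=
  if_pos hi

lemma toTailData_val_of_le (σ : Equiv.Perm (Fin n)) {i : Fin n} (hi : tailStart σ ≤ (i : ℕ)) :
    (toTailData σ).val i = σ i :=
  if_neg (not_lt.2 hi)

lemma isArrangement_prefixWord (σ : Equiv.Perm (Fin n)) :
    IsArrangement (toTailData σ).prefixValues (prefixWord σ) := by
  refine ⟨σ.injective.comp (Fin.castLE_injective _), Set.ext fun x => ?_⟩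
  simp only [TailData.prefixValues, mem_coe, mem_compl, mem_image, mem_filter, mem_univ,
    true_and, not_exists, not_and, Set.mem_range, prefixWord, comp_apply]
  constructor
  · rintro ⟨y, rfl⟩ a ha hay
    rw [toTailData_val_of_le σ ha, σ.injective.eq_iff] at hay
    exact absurd (hay ▸ y.2 : (a : ℕ) < tailStart σ) (not_lt.2 ha)
  · intro h
    refine ⟨⟨σ.symm x, not_le.1 fun hx => h _ hx ?_⟩, by simp⟩
    rw [toTailData_val_of_le σ hx, Equiv.apply_symm_apply]

lemma prefixWord_toPerm (d : TailData n) {w : Fin d.start → Fin n}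
    (hw : IsArrangement d.prefixValues w) (i : ℕ) (hi : i < tailStart (d.toPerm w hw))
    (hi' : i < d.start) : prefixWord (d.toPerm w hw) ⟨i, hi⟩ = w ⟨i, hi'⟩ :=
  d.toPerm_of_lt hw (i := Fin.castLE (tailStart_le _) ⟨i, hi⟩) hi'

lemma sigma_fiber_ext {P : Equiv.Perm (Fin p)} {d₁ d₂ : TailData n} {x₁ : d₁.Fiber P}
    {x₂ : d₂.Fiber P} (hstart : d₁.start = d₂.start) (hval : d₁.val = d₂.val)
    (hw : ∀ (i : ℕ) (h₁ : i < d₁.start) (h₂ : i < d₂.start), x₁.1 ⟨i, h₁⟩ = x₂.1 ⟨i, h₂⟩) :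
    (⟨d₁, x₁⟩ : Σ d : TailData n, d.Fiber P) = ⟨d₂, x₂⟩ := by
  obtain ⟨k, v, _, _, _⟩ := d₁
  obtain ⟨k', v', _, _, _⟩ := d₂
  subst hstart hval
  rw [show x₁ = x₂ from Subtype.ext (funext fun i => hw i.1 i.2 i.2)]

noncomputable def fiberEquiv (P : Equiv.Perm (Fin p)) :
    {σ : Equiv.Perm (Fin n) // ¬ Occurs P (prefixWord σ)} ≃ Σ d : TailData n, d.Fiber P where
  toFun σ := ⟨toTailData σ.1, prefixWord σ.1, isArrangement_prefixWord σ.1, σ.2,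
    fun i hi j hj => by
      rw [toTailData_val_of_le σ.1 hj.ge]
      exact apply_lt_apply_tailStart σ.1 hi hj⟩
  invFun x := ⟨x.1.toPerm x.2.1 x.2.2.1, fun hocc => x.2.2.2.1 <|
    (occurs_congr (x.1.tailStart_toPerm x.2.2.1 x.2.2.2.2) (prefixWord_toPerm x.1 x.2.2.1)).1 hocc⟩
  left_inv σ := Subtype.ext <| Equiv.ext fun i => by
    by_cases hi : (i : ℕ) < tailStart σ.1
    · exact TailData.toPerm_of_lt _ (isArrangement_prefixWord σ.1) hi
    · rw [TailData.toPerm_of_le _ (isArrangement_prefixWord σ.1) (not_lt.1 hi),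
        toTailData_val_of_le σ.1 (not_lt.1 hi)]
  right_inv := by
    rintro ⟨d, w, hw, -, hlast⟩
    have hstart := d.tailStart_toPerm hw hlast
    dsimp only
    refine sigma_fiber_ext hstart (funext fun i => ?_) (prefixWord_toPerm d hw)
    by_cases hi : (i : ℕ) < d.start
    · rw [toTailData_val_of_lt _ (by rw [hstart]; exact hi), d.val_of_lt i hi]
    · rw [toTailData_val_of_le _ (by rw [hstart]; exact not_lt.1 hi),
        TailData.toPerm_of_le _ _ (not_lt.1 hi)]

lemma card_fiber_p231_eq_card_fiber_p321 (d : TailData n) :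
    Nat.card (d.Fiber p231) = Nat.card (d.Fiber p321) := by
  simp only [TailData.Fiber, occurs_p231_iff, occurs_p321_iff]
  exact card_not_has231_eq_card_not_has321 d.prefixValues d.LtHead

end Decomposition

end JuxtapositionClass

open JuxtapositionClass in
theorem stmt (n : ℕ) :
    Nat.card {σ : Equiv.Perm (Fin n) // JuxtAv p231 p12 σ}
      = Nat.card {σ : Equiv.Perm (Fin n) // JuxtAv p321 p12 σ} := by
  rw [Nat.card_congr ((Equiv.subtypeEquivRight (juxtAv_p12_iff p231)).trans (fiberEquiv p231)),
    Nat.card_congr ((Equiv.subtypeEquivRight (juxtAv_p12_iff p321)).trans (fiberEquiv p321))]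
  exact Nat.card_congr (Equiv.sigmaCongrRight fun d =>
    (Finite.card_eq.1 (card_fiber_p231_eq_card_fiber_p321 d)).some)
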